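/- Reduction from memoryless to fair algorithms: let G^× = G_1 × ⋯ × G_k be a direct product of plain games and let A be any (T_1,…,T_k)-memoryless algorithm for G^×. Then there exists a (T_1,…,T_k)-fair algorithm B for G^× whose winning probability is at least the winning probability of A. -/

import Mathlib

open scoped ENNReal BigOperators

noncomputable section

/-- `{0,1}`-valued indicator of a proposition, in `ℝ≥0∞`. -/
def ind (p : Prop) : ℝ≥0∞ :=
  haveI := Classical.propDecidable p
  if p then 1 else 0

/-- Deterministic oracle algorithms making at most `T` queries, modeled as decision
trees of depth at most `T`: a query is an element `q : Q`, the oracle's answer to `q`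
has type `Ans q`, and the final output has type `O`. -/
inductive DT (Q : Type) (Ans : Q → Type) (O : Type) : ℕ → Type
  | ret {T : ℕ} (o : O) : DT Q Ans O T
  | query {T : ℕ} (q : Q) (cont : Ans q → DT Q Ans O T) : DT Q Ans O (T + 1)

/-- Run a decision tree against an oracle. -/
def DT.run {Q : Type} {Ans : Q → Type} {O : Type} :
    {T : ℕ} → DT Q Ans O T → ((q : Q) → Ans q) → O
  | _, DT.ret o, _ => o
  | _, DT.query q cont, f => DT.run (cont (f q)) f

/-- The number of queries satisfying `p` made along the execution path on oracle `f`. -/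
def DT.countP {Q : Type} {Ans : Q → Type} {O : Type} (p : Q → Prop) :
    {T : ℕ} → DT Q Ans O T → ((q : Q) → Ans q) → ℕ
  | _, DT.ret _, _ => 0
  | _, DT.query q cont, f =>
      (haveI := Classical.propDecidable (p q); if p q then 1 else 0)
        + DT.countP p (cont (f q)) f

/-- A (single-challenge) game: an oracle distribution `μ` over functions
`Fin M → Fin N`, a challenge distribution `π f` for each oracle `f`, and an
accepting outcome set `R f ch` for each oracle and challenge. -/
structure Game where
  M : ℕ
  N : ℕ
  hM : 0 < M
  hN : 0 < N
  Ch : Type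
  chFin : Fintype Ch
  Out : Type
  μ : PMF (Fin M → Fin N)
  π : (Fin M → Fin N) → PMF Ch
  R : (Fin M → Fin N) → Ch → Set Out

attribute [instance] Game.chFin

namespace Game

variable (G : Game)

/-- Winning probability of a deterministic `T`-query algorithm (taking the challenge
as classical input) for the game `G`. -/
def detWinProb {T : ℕ} (a : G.Ch → DT (Fin G.M) (fun _ => Fin G.N) G.Out T) : ℝ≥0∞ :=
  ∑' f : Fin G.M → Fin G.N, G.μ f * ∑' ch : G.Ch, G.π f ch * ind ((a ch).run f ∈ G.R f ch)

/-- Uniform security `ε_G(T)`: the supremum, over randomized `T`-query algorithms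
(probability distributions over deterministic ones), of the winning probability. -/
def unifSec (T : ℕ) : ℝ≥0∞ :=
  ⨆ A : PMF (G.Ch → DT (Fin G.M) (fun _ => Fin G.N) G.Out T),
    ∑' a, A a * G.detWinProb a

/-- Winning probability, in the salted game `G_K`, of a non-uniform algorithm:
a randomized `T`-query algorithm `A` receiving `S` bits of advice together with the
salt and challenge, and an advice function `adv` mapping the joint oracle to `S` bits.
The joint oracle consists of `K` i.i.d. copies `g 0, …, g (K-1)` of the oracle of `G`,
the salt `k` is uniform on `Fin K` and the challenge is drawn from `π (g k)`. -/
def saltedWinProb (K S T : ℕ)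
    (A : PMF ((Fin S → Bool) × Fin K × G.Ch →
      DT (Fin K × Fin G.M) (fun _ => Fin G.N) G.Out T))
    (adv : (Fin K → Fin G.M → Fin G.N) → Fin S → Bool) : ℝ≥0∞ :=
  ∑' g : Fin K → Fin G.M → Fin G.N,
    (∏ k, G.μ (g k)) *
      ((K : ℝ≥0∞)⁻¹ *
        ∑' k : Fin K, ∑' ch : G.Ch, G.π (g k) ch *
          ∑' a, A a *
            ind ((a (adv g, k, ch)).run (fun q => g q.1 q.2) ∈ G.R (g k) ch))

/-- Non-uniform security `ε_{G_K}(S,T)` of the salted game `G_K`: the supremum of the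
winning probability over all non-uniform `(S,T)`-algorithms `(A, adv)`. -/
def saltedNonunifSec (K S T : ℕ) : ℝ≥0∞ :=
  ⨆ (A : PMF ((Fin S → Bool) × Fin K × G.Ch →
      DT (Fin K × Fin G.M) (fun _ => Fin G.N) G.Out T))
    (adv : (Fin K → Fin G.M → Fin G.N) → Fin S → Bool),
    G.saltedWinProb K S T A adv

/-- The marginal probability of a challenge `ch` (for `f ∼ μ`, `ch ∼ π f`). -/
def chProb (ch : G.Ch) : ℝ≥0∞ := ∑' f : Fin G.M → Fin G.N, G.μ f * G.π f ch

/-- The oracle distribution `μ_ch` conditioned on the drawn challenge being `ch`. -/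
def condDist (ch : G.Ch) (f : Fin G.M → Fin G.N) : ℝ≥0∞ :=
  G.μ f * G.π f ch / G.chProb ch

/-- Uniform security `ε_{G_ch}(T)` of the challenge-conditioned plain game `G_ch`:
the supremum over randomized `T`-query algorithms of the probability, for
`f ∼ μ_ch`, that the output lies in `R f ch`. -/
def condSec (ch : G.Ch) (T : ℕ) : ℝ≥0∞ :=
  ⨆ A : PMF (DT (Fin G.M) (fun _ => Fin G.N) G.Out T),
    ∑' a, A a * ∑' f : Fin G.M → Fin G.N, G.condDist ch f * ind (a.run f ∈ G.R f ch)

/-- Uniform security `ε_{G^n}(T')` of the multi-challenge game `G^n`: `n` i.i.d.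
challenges are drawn from `π f` and the algorithm must answer all of them. -/
def multiSec (n T' : ℕ) : ℝ≥0∞ :=
  ⨆ A : PMF ((Fin n → G.Ch) → DT (Fin G.M) (fun _ => Fin G.N) (Fin n → G.Out) T'),
    ∑' a, A a * ∑' f : Fin G.M → Fin G.N, G.μ f *
      ∑' chs : Fin n → G.Ch,
        (∏ j, G.π f (chs j)) * ind (∀ j, (a chs).run f j ∈ G.R f (chs j))

end Game

/-- A plain game: a game without challenges. -/
structure PlainGame where
  M : ℕ
  N : ℕ
  hM : 0 < M
  hN : 0 < N
  Out : Type
  μ : PMF (Fin M → Fin N)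
  R : (Fin M → Fin N) → Set Out

namespace PlainGame

/-- Uniform security `ε_G(T)` of a plain game. -/
def unifSec (G : PlainGame) (T : ℕ) : ℝ≥0∞ :=
  ⨆ A : PMF (DT (Fin G.M) (fun _ => Fin G.N) G.Out T),
    ∑' a, A a * ∑' f : Fin G.M → Fin G.N, G.μ f * ind (a.run f ∈ G.R f)

end PlainGame

/-- Query domain for joint oracle access to the oracles of `k` plain games:
each query is addressed to one of the oracles. -/
abbrev ProdQ {k : ℕ} (Gs : Fin k → PlainGame) : Type := (i : Fin k) × Fin (Gs i).M

/-- Answer type for queries in the direct product. -/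
abbrev ProdAns {k : ℕ} (Gs : Fin k → PlainGame) : ProdQ Gs → Type :=
  fun q => Fin (Gs q.1).N

/-- The joint oracle `(f 0, …, f (k-1))` as a single oracle function. -/
def jointOracle {k : ℕ} {Gs : Fin k → PlainGame}
    (f : (i : Fin k) → Fin (Gs i).M → Fin (Gs i).N) : (q : ProdQ Gs) → ProdAns Gs q :=
  fun q => f q.1 q.2

/-- Winning probability of a `(T 0, …, T (k-1))`-memoryless algorithm, given by
deterministic algorithms `A i` (each making at most `T i` queries and each with
joint oracle access) run sequentially with no shared memory; the oracles are drawn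
independently, and the algorithm wins if every output `(A i).run` is accepted. -/
def memorylessWinProb {k : ℕ} (Gs : Fin k → PlainGame) {T : Fin k → ℕ}
    (A : (i : Fin k) → DT (ProdQ Gs) (ProdAns Gs) (Gs i).Out (T i)) : ℝ≥0∞ :=
  ∑' f : (i : Fin k) → Fin (Gs i).M → Fin (Gs i).N,
    (∏ i, (Gs i).μ (f i)) * ind (∀ i, (A i).run (jointOracle f) ∈ (Gs i).R (f i))

/-- Winning probability of a deterministic algorithm with joint oracle access
outputting a tuple `(e 0, …, e (k-1))` for the direct product game. -/
def jointWinProb {k : ℕ} (Gs : Fin k → PlainGame) {B : ℕ}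
    (A : DT (ProdQ Gs) (ProdAns Gs) ((i : Fin k) → (Gs i).Out) B) : ℝ≥0∞ :=
  ∑' f : (i : Fin k) → Fin (Gs i).M → Fin (Gs i).N,
    (∏ i, (Gs i).μ (f i)) * ind (∀ i, A.run (jointOracle f) i ∈ (Gs i).R (f i))

/-- A deterministic algorithm is `(T 0, …, T (k-1))`-fair if in every execution it
makes at most `T i` queries to the `i`-th oracle. -/
def IsFair {k : ℕ} {Gs : Fin k → PlainGame} {O : Type} {B : ℕ} (T : Fin k → ℕ)
    (A : DT (ProdQ Gs) (ProdAns Gs) O B) : Prop :=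
  ∀ (f : (i : Fin k) → Fin (Gs i).M → Fin (Gs i).N) (i : Fin k),
    A.countP (fun q => q.1 = i) (jointOracle f) ≤ T i

end

/-!
Allow arbitrary weights `w i` in place of the oracle distributions and induct on the total
depth of the trees `A i`. Send each tree that still queries to the tree owning the oracle it
queries; then either some querying tree is sent to a tree that has stopped, or the querying
trees contain a cycle. Conditioning on the queried values advances the trees on that edge or
cycle. For each game and each conditioned value keep the best of the decoupled pieces given by
induction and glue them under a query of the conditioned position: that query is paid for by
the step its own tree advanced, or is not needed if that tree has stopped. Running the
resulting single-oracle trees one after the other is fair.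
-/

noncomputable section

lemma ind_of {p : Prop} (h : p) : ind p = 1 := by
  simp [ind, h]

lemma ind_of_not {p : Prop} (h : ¬p) : ind p = 0 := by
  simp [ind, h]

lemma ind_forall {ι : Type*} [Fintype ι] (p : ι → Prop) :
    ind (∀ i, p i) = ∏ i, ind (p i) := by
  by_cases h : ∀ i, p i
  · rw [ind_of h, Finset.prod_eq_one fun i _ => ind_of (h i)]
  · obtain ⟨i, hi⟩ := not_forall.mp h
    rw [ind_of_not h, Finset.prod_eq_zero (Finset.mem_univ i) (ind_of_not hi)]

inductive DecisionTree (Q : Type) (Ans : Q → Type) (O : Type) : Type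
  | ret (o : O)
  | query (q : Q) (cont : Ans q → DecisionTree Q Ans O)

namespace DecisionTree

variable {Q : Type} {Ans : Q → Type} {O O' : Type}

def run : DecisionTree Q Ans O → ((q : Q) → Ans q) → O
  | ret o, _ => o
  | query q c, F => (c (F q)).run F

def countP (p : Q → Prop) : DecisionTree Q Ans O → ((q : Q) → Ans q) → ℕ
  | ret _, _ => 0
  | query q c, F =>
      (haveI := Classical.propDecidable (p q); if p q then 1 else 0) + (c (F q)).countP p F

def root? : DecisionTree Q Ans O → Option Q
  | ret _ => none
  | query q _ => some q

def next : DecisionTree Q Ans O → ((q : Q) → Ans q) → DecisionTree Q Ans O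
  | ret o, _ => ret o
  | query q c, F => c (F q)

def bind : DecisionTree Q Ans O → (O → DecisionTree Q Ans O') → DecisionTree Q Ans O'
  | ret o, k => k o
  | query q c, k => query q fun a => (c a).bind k

lemma root?_eq_none_iff {t : DecisionTree Q Ans O} : t.root? = none ↔ ∃ o, t = ret o := by
  cases t <;> simp [root?]

lemma run_next_of_root? {t : DecisionTree Q Ans O} {q : Q} (hq : t.root? = some q)
    {F G : (q : Q) → Ans q} (hFG : F q = G q) : (t.next F).run G = t.run G := by
  cases t with
  | ret o => rfl
  | query q' c =>
    obtain rfl : q' = q := Option.some.inj hq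
    simp only [next, run, hFG]

lemma run_bind (t : DecisionTree Q Ans O) (k : O → DecisionTree Q Ans O')
    (F : (q : Q) → Ans q) : (t.bind k).run F = (k (t.run F)).run F := by
  induction t with
  | ret o => rfl
  | query q c ih => exact ih (F q)

lemma countP_bind (p : Q → Prop) (t : DecisionTree Q Ans O) (k : O → DecisionTree Q Ans O')
    (F : (q : Q) → Ans q) : (t.bind k).countP p F = t.countP p F + (k (t.run F)).countP p F := by
  induction t with
  | ret o => simp [bind, countP, run]
  | query q c ih => simp only [bind, countP, run, ih]; ring

variable [∀ q, Fintype (Ans q)]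

def depth : DecisionTree Q Ans O → ℕ
  | ret _ => 0
  | query _ c => (Finset.univ.sup fun a => (c a).depth) + 1

lemma depth_cont_lt (q : Q) (c : Ans q → DecisionTree Q Ans O) (a : Ans q) :
    (c a).depth < (query q c).depth :=
  Nat.lt_succ_of_le (Finset.le_sup (f := fun a => (c a).depth) (Finset.mem_univ a))

lemma depth_query_le {q : Q} {c : Ans q → DecisionTree Q Ans O} {d : ℕ}
    (h : ∀ a, (c a).depth ≤ d) : (query q c).depth ≤ d + 1 :=
  Nat.succ_le_succ (Finset.sup_le fun a _ => h a)

lemma depth_next_le (t : DecisionTree Q Ans O) (F : (q : Q) → Ans q) :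
    (t.next F).depth ≤ t.depth := by
  cases t with
  | ret o => rfl
  | query q c => exact (depth_cont_lt q c (F q)).le

lemma depth_next_lt {t : DecisionTree Q Ans O} {q : Q} (hq : t.root? = some q)
    (F : (q : Q) → Ans q) : (t.next F).depth < t.depth := by
  cases t with
  | ret o => simp [root?] at hq
  | query q c => exact depth_cont_lt q c (F q)

lemma countP_le_depth (p : Q → Prop) (t : DecisionTree Q Ans O) (F : (q : Q) → Ans q) :
    t.countP p F ≤ t.depth := by
  induction t with
  | ret o => simp [countP, depth]
  | query q c ih =>
    have := (ih (F q)).trans_lt (depth_cont_lt q c (F q))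
    simp only [countP]
    split <;> omega

def toDT : (t : DecisionTree Q Ans O) → (T : ℕ) → t.depth ≤ T → DT Q Ans O T
  | ret o, _, _ => .ret o
  | query q c, T + 1, h =>
      .query q fun a => (c a).toDT T (Nat.le_of_lt_succ ((depth_cont_lt q c a).trans_le h))
  | query _ _, 0, h => absurd h (by simp [depth])

lemma run_toDT (t : DecisionTree Q Ans O) (T : ℕ) (h : t.depth ≤ T) (F : (q : Q) → Ans q) :
    (t.toDT T h).run F = t.run F := by
  induction t generalizing T with
  | ret o => cases T <;> rfl
  | query q c ih =>
    cases T with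
    | zero => simp [depth] at h
    | succ T => simp [toDT, DT.run, run, ih]

lemma countP_toDT (p : Q → Prop) (t : DecisionTree Q Ans O) (T : ℕ) (h : t.depth ≤ T)
    (F : (q : Q) → Ans q) : (t.toDT T h).countP p F = t.countP p F := by
  induction t generalizing T with
  | ret o => cases T <;> rfl
  | query q c ih =>
    cases T with
    | zero => simp [depth] at h
    | succ T => simp [toDT, DT.countP, countP, ih]

end DecisionTree

namespace DT

variable {Q : Type} {Ans : Q → Type} {O : Type}

def toTree : {T : ℕ} → DT Q Ans O T → DecisionTree Q Ans O
  | _, ret o => .ret o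
  | _, query q c => .query q fun a => (c a).toTree

lemma run_toTree {T : ℕ} (t : DT Q Ans O T) (F : (q : Q) → Ans q) : t.toTree.run F = t.run F := by
  induction t with
  | ret o => rfl
  | query q c ih => exact ih (F q)

lemma depth_toTree_le [∀ q, Fintype (Ans q)] {T : ℕ} (t : DT Q Ans O T) : t.toTree.depth ≤ T := by
  induction t with
  | ret o => exact Nat.zero_le _
  | query q c ih => exact DecisionTree.depth_query_le ih

end DT

section Joint

variable {ι : Type} {X Y : ι → Type}

abbrev JointTree (X Y : ι → Type) (O : Type) : Type := DecisionTree (Σ j, X j) (fun q => Y q.1) O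

namespace DecisionTree

variable {O : Type}

def toJoint (i : ι) : DecisionTree (X i) (fun _ => Y i) O → JointTree X Y O
  | ret o => ret o
  | query x c => query ⟨i, x⟩ fun a => toJoint i (c a)

lemma run_toJoint (i : ι) (t : DecisionTree (X i) (fun _ => Y i) O)
    (F : (q : Σ j, X j) → Y q.1) : (t.toJoint i).run F = t.run fun x => F ⟨i, x⟩ := by
  induction t with
  | ret o => rfl
  | query x c ih => exact ih _

lemma countP_toJoint [DecidableEq ι] (i j : ι) (t : DecisionTree (X j) (fun _ => Y j) O)
    (F : (q : Σ j, X j) → Y q.1) :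
    (t.toJoint j).countP (fun q => q.1 = i) F =
      if j = i then t.countP (fun _ => True) (fun x => F ⟨j, x⟩) else 0 := by
  induction t with
  | ret o => simp [toJoint, countP]
  | query x c ih => by_cases h : j = i <;> simp [toJoint, countP, ih, h]

variable [DecidableEq ι] {O : ι → Type}

def sequence (C : ∀ i, DecisionTree (X i) (fun _ => Y i) (O i)) :
    List ι → (∀ i, O i) → JointTree X Y (∀ i, O i)
  | [], acc => ret acc
  | i :: l, acc => ((C i).toJoint i).bind fun o => sequence C l (Function.update acc i o)

lemma run_sequence (C : ∀ i, DecisionTree (X i) (fun _ => Y i) (O i)) (l : List ι)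
    (acc : ∀ i, O i) (F : (q : Σ j, X j) → Y q.1) (i : ι) :
    (sequence C l acc).run F i = if i ∈ l then (C i).run (fun x => F ⟨i, x⟩) else acc i := by
  induction l generalizing acc with
  | nil => simp [sequence, run]
  | cons j l ih =>
    rw [sequence, run_bind, ih, run_toJoint]
    by_cases hj : i = j
    · subst hj; simp
    · simp [hj]

lemma countP_sequence_le [∀ i, Fintype (Y i)] (C : ∀ i, DecisionTree (X i) (fun _ => Y i) (O i))
    (l : List ι) (acc : ∀ i, O i) (F : (q : Σ j, X j) → Y q.1) (i : ι) :
    (sequence C l acc).countP (fun q => q.1 = i) F ≤ l.count i * (C i).depth := by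
  induction l generalizing acc with
  | nil => simp [sequence, countP]
  | cons j l ih =>
    rw [sequence, countP_bind, countP_toJoint, List.count_cons, add_mul]
    have := ih (Function.update acc j (((C j).toJoint j).run F))
    by_cases hj : j = i
    · subst hj
      have := countP_le_depth (fun _ => True) (C j) fun x => F ⟨j, x⟩
      simp only [if_true, beq_self_eq_true, one_mul]
      omega
    · simpa [hj] using this

end DecisionTree

end Joint

section Own

variable {X Y O : Type} [Inhabited Y]

def observe (p : Option X) (g : X → Y) : Y := p.elim default g

/-- The events `observe p g = β` partition the oracles `g`; for `p = none` all the weight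
sits at `β = default`. -/
def condWeight (w : (X → Y) → ℝ≥0∞) (p : Option X) (β : Y) (g : X → Y) : ℝ≥0∞ :=
  w g * ind (observe p g = β)

lemma condWeight_observe (w : (X → Y) → ℝ≥0∞) (p : Option X) (g : X → Y) :
    condWeight w p (observe p g) g = w g := by
  rw [condWeight, ind_of rfl, mul_one]

variable [Fintype X] [DecidableEq X] [Fintype Y]

def ownWin (w : (X → Y) → ℝ≥0∞) (R : (X → Y) → Set O) (C : DecisionTree X (fun _ => Y) O) :
    ℝ≥0∞ :=
  ∑ g, w g * ind (C.run g ∈ R g)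

lemma sum_ownWin_condWeight (w : (X → Y) → ℝ≥0∞) (R : (X → Y) → Set O) (p : Option X)
    (E : Y → DecisionTree X (fun _ => Y) O) (D : DecisionTree X (fun _ => Y) O)
    (hD : ∀ g, (E (observe p g)).run g = D.run g) :
    ∑ β, ownWin (condWeight w p β) R (E β) = ownWin w R D := by
  simp only [ownWin, condWeight]
  rw [Finset.sum_comm]
  refine Finset.sum_congr rfl fun g _ => ?_
  rw [Finset.sum_eq_single (observe p g), ind_of rfl, mul_one, hD]
  · intro β _ hβ
    rw [ind_of_not (Ne.symm hβ), mul_zero, zero_mul]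
  · exact fun h => absurd (Finset.mem_univ _) h

end Own

lemma Function.exists_iterate_mem_periodicPts {α : Type*} [Finite α] (f : α → α) (x : α) :
    ∃ m, f^[m] x ∈ Function.periodicPts f := by
  obtain ⟨m, n, hne, heq⟩ := Finite.exists_ne_map_eq_of_infinite fun n : ℕ => f^[n] x
  wlog hmn : m < n generalizing m n
  · exact this n m hne.symm heq.symm (by omega)
  refine ⟨m, Function.mk_mem_periodicPts (Nat.sub_pos_of_lt hmn) ?_⟩
  rw [Function.IsPeriodicPt, Function.IsFixedPt, ← Function.iterate_add_apply,
    Nat.sub_add_cancel hmn.le]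
  exact heq.symm

/-- `S` is a single point leaving `Q` if there is one, otherwise the periodic points in `Q`. -/
lemma Function.exists_injOn_mapsTo_or_notMem {α : Type*} [Finite α] (f : α → α) {Q : Set α}
    (hQ : Q.Nonempty) : ∃ S ⊆ Q, S.Nonempty ∧ S.InjOn f ∧ ∀ x ∈ S, f x ∈ S ∨ f x ∉ Q := by
  by_cases hexit : ∃ x ∈ Q, f x ∉ Q
  · obtain ⟨x, hx, hfx⟩ := hexit
    exact ⟨{x}, Set.singleton_subset_iff.mpr hx, Set.singleton_nonempty x,
      Set.injOn_singleton f x, by simpa using Or.inr hfx⟩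
  · have hmaps : Set.MapsTo f Q Q := fun x hx => not_not.mp fun h => hexit ⟨x, hx, h⟩
    obtain ⟨x, hx⟩ := hQ
    obtain ⟨m, hm⟩ := Function.exists_iterate_mem_periodicPts f x
    have hbij := Function.bijOn_periodicPts f
    exact ⟨Q ∩ Function.periodicPts f, Set.inter_subset_left, ⟨_, hmaps.iterate m hx, hm⟩,
      hbij.injOn.mono Set.inter_subset_right,
      fun y hy => Or.inl ⟨hmaps hy.1, hbij.mapsTo hy.2⟩⟩

section Plan

variable {ι : Type} {X : ι → Type}

/-- `r l` is the root query of the `l`-th tree. Conditioning on the values `f j (pos j)`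
lets every tree in `S` advance past its root query, and each conditioned oracle `j` is paid
for by a query of its own tree `j` or is the oracle of a tree making no further queries. -/
structure IsConditioningPlan (r : ι → Option (Σ j, X j)) (S : Set ι)
    (pos : ∀ j, Option (X j)) : Prop where
  root_mem : ∀ l ∈ S, ∃ q, r l = some q ∧ pos q.1 = some q.2
  mem_or_eq_none : ∀ j x, pos j = some x → j ∈ S ∨ r j = none

lemma exists_isConditioningPlan [Finite ι] (r : ι → Option (Σ j, X j))
    (hr : ∃ i, (r i).isSome) : ∃ S pos, S.Nonempty ∧ IsConditioningPlan r S pos := by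
  classical
  let target : ι → ι := fun l => ((r l).map Sigma.fst).getD l
  have htarget : ∀ l q, r l = some q → target l = q.1 := fun l q h => by simp [target, h]
  obtain ⟨S, hSQ, hSne, hinj, hmaps⟩ :=
    Function.exists_injOn_mapsTo_or_notMem target (Q := {l | (r l).isSome}) hr
  let pos : ∀ j, Option (X j) := fun j =>
    if h : ∃ x : X j, ∃ l ∈ S, r l = some ⟨j, x⟩ then some h.choose else none
  have hpos : ∀ j x, pos j = some x → ∃ l ∈ S, r l = some ⟨j, x⟩ := by
    intro j x hx
    by_cases h : ∃ x : X j, ∃ l ∈ S, r l = some ⟨j, x⟩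
    · simp only [pos, dif_pos h, Option.some.injEq] at hx
      exact hx ▸ h.choose_spec
    · simp [pos, dif_neg h] at hx
  refine ⟨S, pos, hSne, ⟨fun l hl => ?_, fun j x hx => ?_⟩⟩
  · obtain ⟨⟨j, x⟩, hq⟩ := Option.isSome_iff_exists.mp (hSQ hl)
    have h : ∃ x : X j, ∃ l ∈ S, r l = some ⟨j, x⟩ := ⟨x, l, hl, hq⟩
    have hchoose : pos j = some h.choose := dif_pos h
    obtain ⟨l', hl', hq'⟩ := hpos j _ hchoose
    obtain rfl : l' = l := hinj hl' hl ((htarget _ _ hq').trans (htarget _ _ hq).symm)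
    obtain rfl : h.choose = x := sigma_mk_injective (Option.some.inj (hq'.symm.trans hq))
    exact ⟨_, hq, hchoose⟩
  · obtain ⟨l, hl, hq⟩ := hpos j x hx
    have hj : target l = j := htarget l _ hq
    rw [← hj]
    refine (hmaps l hl).imp id fun h => ?_
    simpa using h

end Plan

lemma sum_prod_le_prod_sum {ι M : Type*} [Fintype ι] [DecidableEq ι] [CommSemiring M]
    [PartialOrder M] [CanonicallyOrderedAdd M] [IsOrderedRing M] {Z : ι → Type*}
    [∀ i, Fintype (Z i)] {x : (∀ i, Z i) → ι → M} {g : ∀ i, Z i → M}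
    (h : ∀ b i, x b i ≤ g i (b i)) : ∑ b, ∏ i, x b i ≤ ∏ i, ∑ z, g i z := by
  rw [Finset.prod_univ_sum, Fintype.piFinset_univ]
  exact Finset.sum_le_sum fun b _ => Finset.prod_le_prod' fun i _ => h b i

section Advance

variable {ι : Type} {X Y O : ι → Type}

open Classical in
def advance (S : Set ι) (A : ∀ i, JointTree X Y (O i)) (b : ∀ j, Y j) :
    ∀ i, JointTree X Y (O i) :=
  fun l => if l ∈ S then (A l).next fun q => b q.1 else A l

variable {S : Set ι} {A : ∀ i, JointTree X Y (O i)}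

lemma advance_of_eq_ret (b : ∀ j, Y j) {l : ι} {o : O l} (h : A l = .ret o) :
    advance S A b l = .ret o := by
  unfold advance
  split <;> simp [h, DecisionTree.next]

lemma run_advance_observe [∀ i, Inhabited (Y i)] {pos : ∀ j, Option (X j)}
    (hP : IsConditioningPlan (fun l => (A l).root?) S pos) (f : ∀ i, X i → Y i) (l : ι) :
    (advance S A (fun j => observe (pos j) (f j)) l).run (fun q => f q.1 q.2) =
      (A l).run fun q => f q.1 q.2 := by
  unfold advance
  split
  · obtain ⟨q, hq, hpos⟩ := hP.root_mem l ‹_›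
    exact DecisionTree.run_next_of_root? hq (by simp [observe, hpos])
  · rfl

variable [∀ i, Fintype (Y i)]

lemma depth_advance_le (b : ∀ j, Y j) (l : ι) : (advance S A b l).depth ≤ (A l).depth := by
  unfold advance
  split
  · exact DecisionTree.depth_next_le _ _
  · exact le_rfl

lemma depth_advance_lt {pos : ∀ j, Option (X j)}
    (hP : IsConditioningPlan (fun l => (A l).root?) S pos) (b : ∀ j, Y j) {l : ι} (hl : l ∈ S) :
    (advance S A b l).depth < (A l).depth := by
  obtain ⟨q, hq, -⟩ := hP.root_mem l hl
  simpa [advance, hl] using DecisionTree.depth_next_lt hq _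

lemma sum_depth_advance_lt [Fintype ι] {pos : ∀ j, Option (X j)}
    (hP : IsConditioningPlan (fun l => (A l).root?) S pos) (hS : S.Nonempty) (b : ∀ j, Y j) :
    ∑ i, (advance S A b i).depth < ∑ i, (A i).depth :=
  Finset.sum_lt_sum (fun l _ => depth_advance_le b l)
    ⟨hS.some, Finset.mem_univ _, depth_advance_lt hP b hS.some_mem⟩

end Advance

section Decoupling

variable {ι : Type} [Fintype ι] [DecidableEq ι] {X Y O : ι → Type}
  [∀ i, Fintype (X i)] [∀ i, DecidableEq (X i)] [∀ i, Fintype (Y i)]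
  (R : ∀ i, (X i → Y i) → Set (O i))

def jointWin (w : ∀ i, (X i → Y i) → ℝ≥0∞) (A : ∀ i, JointTree X Y (O i)) : ℝ≥0∞ :=
  ∑ f : ∀ i, X i → Y i,
    (∏ i, w i (f i)) * ind (∀ i, (A i).run (fun q => f q.1 q.2) ∈ R i (f i))

lemma prod_ownWin (w : ∀ i, (X i → Y i) → ℝ≥0∞)
    (C : ∀ i, DecisionTree (X i) (fun _ => Y i) (O i)) :
    ∏ i, ownWin (w i) (R i) (C i) =
      ∑ f : ∀ i, X i → Y i, (∏ i, w i (f i)) * ind (∀ i, (C i).run (f i) ∈ R i (f i)) := by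
  simp only [ownWin, Finset.prod_univ_sum, Fintype.piFinset_univ, ind_forall,
    ← Finset.prod_mul_distrib]

/-- Keeping the leaves is what lets the induction condition on the oracle of a stopped tree. -/
structure Decouples (w : ∀ i, (X i → Y i) → ℝ≥0∞) (A : ∀ i, JointTree X Y (O i))
    (C : ∀ i, DecisionTree (X i) (fun _ => Y i) (O i)) : Prop where
  depth_le : ∀ i, (C i).depth ≤ (A i).depth
  eq_ret : ∀ i o, A i = .ret o → C i = .ret o
  jointWin_le : jointWin R w A ≤ ∏ i, ownWin (w i) (R i) (C i)

lemma decouples_ret (w : ∀ i, (X i → Y i) → ℝ≥0∞) (e : ∀ i, O i) :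
    Decouples R w (fun i => .ret (e i)) (fun i => .ret (e i)) :=
  ⟨fun _ => le_rfl, fun _ _ h => by rw [DecisionTree.ret.inj h],
    (prod_ownWin R w fun i => .ret (e i)).ge⟩

variable {R} [∀ i, Inhabited (Y i)] {S : Set ι} {pos : ∀ j, Option (X j)}
  {w : ∀ i, (X i → Y i) → ℝ≥0∞} {A : ∀ i, JointTree X Y (O i)}

lemma jointWin_le_sum_advance (hP : IsConditioningPlan (fun l => (A l).root?) S pos) :
    jointWin R w A ≤
      ∑ b : ∀ j, Y j, jointWin R (fun j => condWeight (w j) (pos j) (b j)) (advance S A b) := by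
  unfold jointWin
  rw [Finset.sum_comm]
  refine Finset.sum_le_sum fun f _ => ?_
  refine le_of_eq_of_le ?_
    (Finset.single_le_sum (fun _ _ => zero_le) (Finset.mem_univ fun j => observe (pos j) (f j)))
  simp only [condWeight_observe, run_advance_observe hP]

lemma exists_ownTree_of_advance (hP : IsConditioningPlan (fun l => (A l).root?) S pos)
    {C : (∀ j, Y j) → ∀ i, DecisionTree (X i) (fun _ => Y i) (O i)}
    (hC : ∀ b, Decouples R (fun j => condWeight (w j) (pos j) (b j)) (advance S A b) (C b))
    (i : ι) (bsel : Y i → ∀ j, Y j) :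
    ∃ D : DecisionTree (X i) (fun _ => Y i) (O i),
      D.depth ≤ (A i).depth ∧ (∀ o, A i = .ret o → D = .ret o) ∧
        ∑ β, ownWin (condWeight (w i) (pos i) β) (R i) (C (bsel β) i) =
          ownWin (w i) (R i) D := by
  have hdepth : ∀ b, (C b i).depth ≤ (A i).depth :=
    fun b => ((hC b).depth_le i).trans (depth_advance_le b i)
  obtain ⟨o, hA⟩ | ⟨q, c, hA⟩ : (∃ o, A i = .ret o) ∨ ∃ q c, A i = .query q c := by
    cases A i <;> simp
  · have hCb : ∀ b, C b i = .ret o := fun b => (hC b).eq_ret i o (advance_of_eq_ret b hA)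
    refine ⟨.ret o, zero_le, fun _ h => by rw [DecisionTree.ret.inj (hA.symm.trans h)], ?_⟩
    exact sum_ownWin_condWeight _ _ _ _ _ fun g => by rw [hCb]
  suffices ∃ D : DecisionTree (X i) (fun _ => Y i) (O i), D.depth ≤ (A i).depth ∧
      ∑ β, ownWin (condWeight (w i) (pos i) β) (R i) (C (bsel β) i) = ownWin (w i) (R i) D from
    this.imp fun D hD => ⟨hD.1, (fun _ h => nomatch hA.symm.trans h), hD.2⟩
  cases hpos : pos i with
  | none =>
    exact ⟨C (bsel default) i, hdepth _, sum_ownWin_condWeight _ _ _ _ _ fun g => rfl⟩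
  | some x =>
    have hi : i ∈ S := (hP.mem_or_eq_none i x hpos).resolve_right (by simp [hA, DecisionTree.root?])
    refine ⟨.query x fun β => C (bsel β) i, ?_, sum_ownWin_condWeight _ _ _ _ _ fun g => rfl⟩
    have hlt : ∀ β, (C (bsel β) i).depth < (A i).depth :=
      fun β => ((hC _).depth_le i).trans_lt (depth_advance_lt hP _ hi)
    obtain ⟨d, hd⟩ : ∃ d, (A i).depth = d + 1 := ⟨_, by rw [hA]; rfl⟩
    rw [hd] at hlt ⊢
    exact DecisionTree.depth_query_le fun β => Nat.le_of_lt_succ (hlt β)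

lemma exists_decouples_of_advance (hP : IsConditioningPlan (fun l => (A l).root?) S pos)
    (h : ∀ b, ∃ C, Decouples R (fun j => condWeight (w j) (pos j) (b j)) (advance S A b) C) :
    ∃ C, Decouples R w A C := by
  choose C hC using h
  choose bsel hbsel using fun i (β : Y i) =>
    Finite.exists_max fun b => ownWin (condWeight (w i) (pos i) β) (R i) (C b i)
  choose D hDdepth hDret hDwin using exists_ownTree_of_advance hP hC
  refine ⟨fun i => D i (bsel i), fun i => hDdepth i _, fun i => hDret i _, ?_⟩
  calc jointWin R w A
      ≤ ∑ b, jointWin R (fun j => condWeight (w j) (pos j) (b j)) (advance S A b) :=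
        jointWin_le_sum_advance hP
    _ ≤ ∑ b, ∏ i, ownWin (condWeight (w i) (pos i) (b i)) (R i) (C b i) :=
        Finset.sum_le_sum fun b _ => (hC b).jointWin_le
    _ ≤ ∏ i, ∑ β, ownWin (condWeight (w i) (pos i) β) (R i) (C (bsel i β) i) :=
        sum_prod_le_prod_sum fun b i => hbsel i (b i) b
    _ = ∏ i, ownWin (w i) (R i) (D i (bsel i)) :=
        Finset.prod_congr rfl fun i _ => hDwin i (bsel i)

variable (R) in
theorem exists_decouples (w : ∀ i, (X i → Y i) → ℝ≥0∞) (A : ∀ i, JointTree X Y (O i)) :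
    ∃ C, Decouples R w A C := by
  induction hn : ∑ i, (A i).depth using Nat.strong_induction_on generalizing w A with
  | _ n ih =>
  by_cases hleaf : ∀ i, (A i).root? = none
  · choose e he using fun i => DecisionTree.root?_eq_none_iff.mp (hleaf i)
    obtain rfl : A = fun i => .ret (e i) := funext he
    exact ⟨_, decouples_ret R w e⟩
  · obtain ⟨S, pos, hS, hP⟩ := exists_isConditioningPlan (fun l => (A l).root?)
      (by simpa [Option.isSome_iff_ne_none] using hleaf)
    exact exists_decouples_of_advance hP fun b =>
      ih _ (hn ▸ sum_depth_advance_lt hP hS b) _ _ rfl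

end Decoupling

section PlainGame

variable {k : ℕ} (Gs : Fin k → PlainGame)

lemma memorylessWinProb_eq_jointWin {T : Fin k → ℕ}
    (A : (i : Fin k) → DT (ProdQ Gs) (ProdAns Gs) (Gs i).Out (T i)) :
    memorylessWinProb Gs A =
      jointWin (fun i => (Gs i).R) (fun i => (Gs i).μ) fun i => (A i).toTree := by
  simp only [memorylessWinProb, jointWin, tsum_fintype, DT.run_toTree]
  rfl

variable {Gs} (C : ∀ i, DecisionTree (Fin (Gs i).M) (fun _ => Fin (Gs i).N) (Gs i).Out)
  (acc : ∀ i, (Gs i).Out) {d : ℕ} (hd : (DecisionTree.sequence C (List.finRange k) acc).depth ≤ d)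

lemma jointWinProb_toDT_sequence :
    jointWinProb Gs ((DecisionTree.sequence C (List.finRange k) acc).toDT d hd) =
      ∏ i, ownWin (Gs i).μ (Gs i).R (C i) := by
  simp only [jointWinProb, tsum_fintype, prod_ownWin, DecisionTree.run_toDT, jointOracle,
    DecisionTree.run_sequence, List.mem_finRange, if_true]

lemma isFair_toDT_sequence {T : Fin k → ℕ} (hC : ∀ i, (C i).depth ≤ T i) :
    IsFair T ((DecisionTree.sequence C (List.finRange k) acc).toDT d hd) := by
  intro f i
  rw [DecisionTree.countP_toDT]
  refine (DecisionTree.countP_sequence_le C _ acc _ i).trans ?_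
  rw [List.count_eq_one_of_mem (List.nodup_finRange k) (List.mem_finRange i), one_mul]
  exact hC i

end PlainGame

end

/-- Reduction from memoryless to fair algorithms: for every
`(T 0, …, T (k-1))`-memoryless algorithm `A` for the direct product
`G 0 × ⋯ × G (k-1)` there is a `(T 0, …, T (k-1))`-fair algorithm whose winning
probability is at least that of `A`. -/
theorem memoryless_to_fair {k : ℕ} (Gs : Fin k → PlainGame) (T : Fin k → ℕ)
    (A : (i : Fin k) → DT (ProdQ Gs) (ProdAns Gs) (Gs i).Out (T i)) :
    ∃ (B : ℕ) (Bfair : DT (ProdQ Gs) (ProdAns Gs) ((i : Fin k) → (Gs i).Out) B),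
      IsFair T Bfair ∧ memorylessWinProb Gs A ≤ jointWinProb Gs Bfair := by
  let : ∀ i, Inhabited (Fin (Gs i).N) := fun i => ⟨⟨0, (Gs i).hN⟩⟩
  obtain ⟨C, hC⟩ := exists_decouples (fun i => (Gs i).R) (fun i => (Gs i).μ) fun i => (A i).toTree
  let B := DecisionTree.sequence C (List.finRange k) fun i => (C i).run fun _ => default
  refine ⟨B.depth, B.toDT B.depth le_rfl,
    isFair_toDT_sequence C _ _ fun i => (hC.depth_le i).trans (A i).depth_toTree_le, ?_⟩
  rw [memorylessWinProb_eq_jointWin, jointWinProb_toDT_sequence]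
  exact hC.jointWin_le
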